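/- For every conditional statement P, rpbf(P) := rpf(bf(P)) is an rp-basic form, where rp-basic forms are the basic forms in which, below any node labeled a, each immediate subterm that is itself a conditional either has central condition different from a, or has both outer arguments equal. -/

import Mathlib

inductive CS (A : Type) : Type
  | tt : CS A
  | ff : CS A
  | atom : A → CS A
  | cond : CS A → CS A → CS A → CS A

namespace CS

variable {A : Type}

/-- Basic forms: the central condition is always an atom. -/
inductive IsBasic : CS A → Prop
  | tt : IsBasic tt
  | ff : IsBasic ff
  | cond {p q : CS A} (a : A) : IsBasic p → IsBasic q → IsBasic (cond p (atom a) q)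

/-- Provability from the axioms CP of proposition algebra. `cond x y z` is x ◁ y ▷ z. -/
inductive CP : CS A → CS A → Prop
  | refl (p : CS A) : CP p p
  | symm {p q} : CP p q → CP q p
  | trans {p q r} : CP p q → CP q r → CP p r
  | congr {p p' q q' r r'} :
      CP p p' → CP q q' → CP r r' → CP (.cond p q r) (.cond p' q' r')
  | cp1 (x y : CS A) : CP (.cond x .tt y) x
  | cp2 (x y : CS A) : CP (.cond x .ff y) y
  | cp3 (x : CS A) : CP (.cond .tt x .ff) x
  | cp4 (x y z u v : CS A) :
      CP (.cond x (.cond y z u) v) (.cond (.cond x y v) z (.cond x u v))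

/-- Evaluation trees with leaves T, F and internal nodes labeled by atoms. -/
inductive ET (A : Type) : Type
  | tt : ET A
  | ff : ET A
  | node : ET A → A → ET A → ET A

/-- Leaf replacement X[T↦Y, F↦Z] on evaluation trees. -/
def ET.repl : ET A → ET A → ET A → ET A
  | .tt, y, _ => y
  | .ff, _, z => z
  | .node l a r, y, z => .node (ET.repl l y z) a (ET.repl r y z)

/-- Short-circuit evaluation into evaluation trees. -/
def se : CS A → ET A
  | .tt => .tt
  | .ff => .ff
  | .atom a => .node .tt a .ff
  | .cond p q r => ET.repl (se q) (se p) (se r)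

/-- Syntactic leaf replacement P[T↦Q, F↦R] on (basic) conditional statements. -/
def srepl : CS A → CS A → CS A → CS A
  | .tt, y, _ => y
  | .ff, _, z => z
  | .atom a, _, _ => .atom a
  | .cond p c q, y, z => .cond (srepl p y z) c (srepl q y z)

/-- The basic form function. -/
def bf : CS A → CS A
  | .tt => .tt
  | .ff => .ff
  | .atom a => .cond .tt (.atom a) .ff
  | .cond p q r => srepl (bf q) (bf p) (bf r)

/-- Depth of a basic form. -/
def d : CS A → ℕ
  | .cond p _ r => 1 + max (d p) (d r)
  | _ => 0

end CS
namespace CS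
variable {A : Type} [DecidableEq A]
def fA (a : A) : CS A → CS A
  | .cond p (.atom b) q => if b = a then .cond (fA a p) (.atom a) (fA a p) else .cond p (.atom b) q
  | x => x
def gA (a : A) : CS A → CS A
  | .cond p (.atom b) q => if b = a then .cond (gA a q) (.atom a) (gA a q) else .cond p (.atom b) q
  | x => x
theorem d_fA (a : A) : ∀ p : CS A, d (fA a p) ≤ d p
  | .tt => le_refl _
  | .ff => le_refl _
  | .atom _ => le_refl _
  | .cond p .tt q => le_refl _
  | .cond p .ff q => le_refl _
  | .cond p (.atom b) q => by
      by_cases h : b = a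
      · have ih := d_fA a p
        simp only [fA, h, if_true, d]
        omega
      · simp [fA, h]
  | .cond p (.cond x y z) q => le_refl _
theorem d_gA (a : A) : ∀ p : CS A, d (gA a p) ≤ d p
  | .tt => le_refl _
  | .ff => le_refl _
  | .atom _ => le_refl _
  | .cond p .tt q => le_refl _
  | .cond p .ff q => le_refl _
  | .cond p (.atom b) q => by
      by_cases h : b = a
      · have ih := d_gA a q
        simp only [gA, h, if_true, d]
        omega
      · simp [gA, h]
  | .cond p (.cond x y z) q => le_refl _
def rpf : CS A → CS A
  | .cond p (.atom a) q => .cond (rpf (fA a p)) (.atom a) (rpf (gA a q))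
  | x => x
termination_by p => d p
decreasing_by
  · exact lt_of_le_of_lt (d_fA _ _) (by simp only [d]; omega)
  · exact lt_of_le_of_lt (d_gA _ _) (by simp only [d]; omega)
end CS
namespace CS
variable {A : Type} [DecidableEq A]

/-- Memorizing auxiliary function ℓ_a on basic forms. -/
def lA (a : A) : CS A → CS A
  | .cond p (.atom b) q => if b = a then lA a p else .cond (lA a p) (.atom b) (lA a q)
  | x => x

/-- Memorizing auxiliary function r_a on basic forms. -/
def rA (a : A) : CS A → CS A
  | .cond p (.atom b) q => if b = a then rA a q else .cond (rA a p) (.atom b) (rA a q)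
  | x => x

theorem d_lA (a : A) : ∀ p : CS A, d (lA a p) ≤ d p
  | .tt => le_refl _
  | .ff => le_refl _
  | .atom _ => le_refl _
  | .cond p .tt q => le_refl _
  | .cond p .ff q => le_refl _
  | .cond p (.atom b) q => by
      by_cases h : b = a
      · have ih := d_lA a p
        simp only [lA, h, if_true, d]
        omega
      · have ih1 := d_lA a p
        have ih2 := d_lA a q
        simp only [lA, h, if_false, d]
        omega
  | .cond p (.cond x y z) q => le_refl _

theorem d_rA (a : A) : ∀ p : CS A, d (rA a p) ≤ d p
  | .tt => le_refl _
  | .ff => le_refl _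
  | .atom _ => le_refl _
  | .cond p .tt q => le_refl _
  | .cond p .ff q => le_refl _
  | .cond p (.atom b) q => by
      by_cases h : b = a
      · have ih := d_rA a q
        simp only [rA, h, if_true, d]
        omega
      · have ih1 := d_rA a p
        have ih2 := d_rA a q
        simp only [rA, h, if_false, d]
        omega
  | .cond p (.cond x y z) q => le_refl _

/-- The function mf transforming basic forms into mem-basic forms. -/
def mf : CS A → CS A
  | .cond p (.atom a) q => .cond (mf (lA a p)) (.atom a) (mf (rA a q))
  | x => x
termination_by p => d p
decreasing_by
  · exact lt_of_le_of_lt (d_lA _ _) (by simp only [d]; omega)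
  · exact lt_of_le_of_lt (d_rA _ _) (by simp only [d]; omega)

/-- Depth of an evaluation tree. -/
def ET.d : ET A → ℕ
  | .node l _ r => 1 + max (ET.d l) (ET.d r)
  | _ => 0

/-- Repetition-proof auxiliary transformation F_a on evaluation trees. -/
def ET.FA (a : A) : ET A → ET A
  | .node l b r => if b = a then .node (ET.FA a l) a (ET.FA a l) else .node l b r
  | x => x

/-- Repetition-proof auxiliary transformation G_a on evaluation trees. -/
def ET.GA (a : A) : ET A → ET A
  | .node l b r => if b = a then .node (ET.GA a r) a (ET.GA a r) else .node l b r
  | x => x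

theorem ET.d_FA (a : A) : ∀ x : ET A, ET.d (ET.FA a x) ≤ ET.d x
  | .tt => le_refl _
  | .ff => le_refl _
  | .node l b r => by
      by_cases h : b = a
      · have ih := ET.d_FA a l
        simp only [ET.FA, h, if_true, ET.d]
        omega
      · simp [ET.FA, h]

theorem ET.d_GA (a : A) : ∀ x : ET A, ET.d (ET.GA a x) ≤ ET.d x
  | .tt => le_refl _
  | .ff => le_refl _
  | .node l b r => by
      by_cases h : b = a
      · have ih := ET.d_GA a r
        simp only [ET.GA, h, if_true, ET.d]
        omega
      · simp [ET.GA, h]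

/-- The transformation rp on evaluation trees. -/
def ET.rp : ET A → ET A
  | .node l a r => .node (ET.rp (ET.FA a l)) a (ET.rp (ET.GA a r))
  | x => x
termination_by x => ET.d x
decreasing_by
  · exact lt_of_le_of_lt (ET.d_FA _ _) (by simp only [ET.d]; omega)
  · exact lt_of_le_of_lt (ET.d_GA _ _) (by simp only [ET.d]; omega)

end CS
namespace CS
variable {A : Type}

/-- Side condition for rp-basic forms: a non-constant immediate subterm of a node
labeled `a` either has central condition different from `a`, or equal outer arguments. -/
def SideOk (a : A) : CS A → Prop
  | .tt => True
  | .ff => True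
  | .cond p (.atom b) q => b ≠ a ∨ p = q
  | _ => False

/-- Rp-basic forms. -/
inductive IsRpBasic : CS A → Prop
  | tt : IsRpBasic tt
  | ff : IsRpBasic ff
  | cond {p q : CS A} (a : A) : IsRpBasic p → IsRpBasic q →
      SideOk a p → SideOk a q → IsRpBasic (cond p (atom a) q)

/-- Mem-basic forms over a subset A' of the atoms. -/
inductive IsMemBasicOver : Set A → CS A → Prop
  | tt (A' : Set A) : IsMemBasicOver A' tt
  | ff (A' : Set A) : IsMemBasicOver A' ff
  | cond {A' : Set A} {p q : CS A} (a : A) : a ∈ A' →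
      IsMemBasicOver (A' \ {a}) p → IsMemBasicOver (A' \ {a}) q →
      IsMemBasicOver A' (cond p (atom a) q)

/-- Mem-basic forms. -/
def IsMemBasic (p : CS A) : Prop := ∃ A' : Set A, IsMemBasicOver A' p

/-- Provability from CPrp: CP plus the repetition-proof axiom schemes. -/
inductive CPrp : CS A → CS A → Prop
  | refl (p : CS A) : CPrp p p
  | symm {p q} : CPrp p q → CPrp q p
  | trans {p q r} : CPrp p q → CPrp q r → CPrp p r
  | congr {p p' q q' r r'} :
      CPrp p p' → CPrp q q' → CPrp r r' → CPrp (.cond p q r) (.cond p' q' r')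
  | cp1 (x y : CS A) : CPrp (.cond x .tt y) x
  | cp2 (x y : CS A) : CPrp (.cond x .ff y) y
  | cp3 (x : CS A) : CPrp (.cond .tt x .ff) x
  | cp4 (x y z u v : CS A) :
      CPrp (.cond x (.cond y z u) v) (.cond (.cond x y v) z (.cond x u v))
  | rp1 (a : A) (x y z : CS A) :
      CPrp (.cond (.cond x (.atom a) y) (.atom a) z)
           (.cond (.cond x (.atom a) x) (.atom a) z)
  | rp2 (a : A) (x y z : CS A) :
      CPrp (.cond x (.atom a) (.cond y (.atom a) z))
           (.cond x (.atom a) (.cond z (.atom a) z))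

/-- Provability from CPmem: CP plus the memorizing axiom. -/
inductive CPmem : CS A → CS A → Prop
  | refl (p : CS A) : CPmem p p
  | symm {p q} : CPmem p q → CPmem q p
  | trans {p q r} : CPmem p q → CPmem q r → CPmem p r
  | congr {p p' q q' r r'} :
      CPmem p p' → CPmem q q' → CPmem r r' → CPmem (.cond p q r) (.cond p' q' r')
  | cp1 (x y : CS A) : CPmem (.cond x .tt y) x
  | cp2 (x y : CS A) : CPmem (.cond x .ff y) y
  | cp3 (x : CS A) : CPmem (.cond .tt x .ff) x
  | cp4 (x y z u v : CS A) :
      CPmem (.cond x (.cond y z u) v) (.cond (.cond x y v) z (.cond x u v))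
  | mem (x y z u v w : CS A) :
      CPmem (.cond x y (.cond z u (.cond v y w))) (.cond x y (.cond z u w))

end CS

/-! `rpf` sends `P ◁ a ▷ Q` to `rpf (f_a P) ◁ a ▷ rpf (g_a Q)`. If `P = P₁ ◁ a ▷ P₂`,
then `f_a P = x ◁ a ▷ x` with `x = f_a P₁` fixed by both `f_a` and `g_a`, so `rpf` keeps its two
branches equal; symmetrically for `Q`. Induction on the depth of the basic form `bf P` finishes. -/

namespace CS

section
variable {A : Type}

theorem IsBasic.srepl {p y z : CS A} (hp : IsBasic p) (hy : IsBasic y) (hz : IsBasic z) :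
    IsBasic (srepl p y z) := by
  induction hp with
  | tt => exact hy
  | ff => exact hz
  | cond a _ _ ih₁ ih₂ => exact .cond a ih₁ ih₂

theorem isBasic_bf (P : CS A) : IsBasic (bf P) := by
  induction P with
  | tt => exact .tt
  | ff => exact .ff
  | atom a => exact .cond a .tt .ff
  | cond p q r ihp ihq ihr => exact ihq.srepl ihp ihr

end

variable {A : Type} [DecidableEq A]

theorem IsBasic.fA (a : A) {p : CS A} (hp : IsBasic p) : IsBasic (fA a p) := by
  induction hp with
  | tt => exact .tt
  | ff => exact .ff
  | cond b h₁ h₂ ih₁ _ =>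
      by_cases h : b = a
      · simpa [CS.fA, h] using IsBasic.cond a ih₁ ih₁
      · simpa [CS.fA, h] using IsBasic.cond b h₁ h₂

theorem IsBasic.gA (a : A) {p : CS A} (hp : IsBasic p) : IsBasic (gA a p) := by
  induction hp with
  | tt => exact .tt
  | ff => exact .ff
  | cond b h₁ h₂ _ ih₂ =>
      by_cases h : b = a
      · simpa [CS.gA, h] using IsBasic.cond a ih₂ ih₂
      · simpa [CS.gA, h] using IsBasic.cond b h₁ h₂

theorem fA_fA (a : A) (p : CS A) : fA a (fA a p) = fA a p := by
  fun_induction fA a p <;> simp_all [fA]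

theorem gA_fA (a : A) (p : CS A) : gA a (fA a p) = fA a p := by
  fun_induction fA a p <;> simp_all [gA]

theorem gA_gA (a : A) (p : CS A) : gA a (gA a p) = gA a p := by
  fun_induction gA a p <;> simp_all [gA]

theorem fA_gA (a : A) (p : CS A) : fA a (gA a p) = gA a p := by
  fun_induction gA a p <;> simp_all [fA]

theorem rpf_cond (p q : CS A) (a : A) :
    rpf (cond p (atom a) q) = cond (rpf (fA a p)) (atom a) (rpf (gA a q)) := by
  rw [rpf]

@[simp] theorem rpf_tt : rpf (tt : CS A) = tt := by simp [rpf]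
@[simp] theorem rpf_ff : rpf (ff : CS A) = ff := by simp [rpf]

theorem sideOk_rpf_fA (a : A) {p : CS A} (hp : IsBasic p) : SideOk a (rpf (fA a p)) := by
  cases hp with
  | tt => simp [fA, SideOk]
  | ff => simp [fA, SideOk]
  | cond b =>
      by_cases h : b = a
      · simp [fA, h, rpf_cond, fA_fA, gA_fA, SideOk]
      · simp [fA, h, rpf_cond, SideOk]

theorem sideOk_rpf_gA (a : A) {p : CS A} (hp : IsBasic p) : SideOk a (rpf (gA a p)) := by
  cases hp with
  | tt => simp [gA, SideOk]
  | ff => simp [gA, SideOk]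
  | cond b =>
      by_cases h : b = a
      · simp [gA, h, rpf_cond, fA_gA, gA_gA, SideOk]
      · simp [gA, h, rpf_cond, SideOk]

theorem IsBasic.isRpBasic_rpf {p : CS A} (hp : IsBasic p) : IsRpBasic (rpf p) := by
  fun_induction rpf p with
  | case1 p a q ih₁ ih₂ =>
      cases hp with
      | cond _ hp hq =>
          exact .cond a (ih₁ (hp.fA a)) (ih₂ (hq.gA a)) (sideOk_rpf_fA a hp) (sideOk_rpf_gA a hq)
  | case2 p hnotCond =>
      cases hp with
      | tt => exact .tt
      | ff => exact .ff
      | cond a => exact absurd rfl (hnotCond _ _ _)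

end CS

theorem stmt11 {A : Type} [DecidableEq A] (P : CS A) :
    CS.IsRpBasic (CS.rpf (CS.bf P)) :=
  (CS.isBasic_bf P).isRpBasic_rpf
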